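/- Per-step redistribution bound in NRM: for every executed step j of NRM in trees and every q ∈ X_j, the quantity S_{−q} satisfies 0 ≤ S_{−q} ≤ p^{auc}_{a_j} − p^{auc}_{a_{j−1}}; consequently, since Σ_{q∈X_j} n_q/n_{X_j} = 1, the total money redistributed in step j satisfies Σ_{q∈X_j} R_q = Σ_{q∈X_j} (n_q/n_{X_j})·S_{−q} ≤ p^{auc}_{a_j} − p^{auc}_{a_{j−1}}. -/

import Mathlib

open Finset

attribute [local instance] Classical.propDecidable

noncomputable section

/-- A tree network rooted at a resource owner `o`: the agents are the elements of
the finite type `α`, and `parent i = none` means that the parent of agent `i` is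
the owner `o` herself.  The field `depth` records the distance to the owner and
witnesses that the parent relation is well-founded. -/
structure TreeNet (α : Type) [Fintype α] [DecidableEq α] where
  parent : α → Option α
  depth : α → ℕ
  depth_root : ∀ i, parent i = none → depth i = 0
  depth_child : ∀ i j, parent i = some j → depth i = depth j + 1

namespace TreeNet

variable {α : Type} [Fintype α] [DecidableEq α]

/-- `j` is a strict ancestor of `i`: iterating `parent` from `i` reaches `j`. -/
def StrictAnc (T : TreeNet α) (j i : α) : Prop :=
  ∃ m : ℕ, 0 < m ∧ (fun x : Option α => x.bind T.parent)^[m] (some i) = some j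

/-- the subtree `V_i` of agent `i` inside the participant set `V`:
`i` together with all its descendants. -/
def sub (T : TreeNet α) (V : Finset α) (i : α) : Finset α :=
  V.filter fun x => x = i ∨ T.StrictAnc i x

/-- `n_i`, the number of agents in the subtree of `i`. -/
def nsub (T : TreeNet α) (V : Finset α) (i : α) : ℕ := (T.sub V i).card

/-- `v^{(1)}_D`: the highest reported valuation in `D` (with the convention `0`
for `D = ∅`). -/
def vmax (val : α → ℝ) (D : Finset α) : ℝ :=
  if h : D.Nonempty then D.sup' h val else 0

/-- the list of strict ancestors of `i`, ordered by increasing depth. -/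
def ancList (T : TreeNet α) (i : α) : List α :=
  match h : T.parent i with
  | none => []
  | some j => T.ancList j ++ [j]
termination_by T.depth i
decreasing_by
  have := T.depth_child i j h
  omega

/-- the full sequence `a_1, …, a_{k+1}`: the strict ancestors of the highest
bidder `hb` ordered by increasing depth, followed by `hb` itself. -/
def seq (T : TreeNet α) (hb : α) : List α := T.ancList hb ++ [hb]

/-- `a_j`, as an `Option α`: `none` for `j = 0` (the owner `o`) and out of range. -/
def aIdx (T : TreeNet α) (hb : α) (j : ℕ) : Option α :=
  if j = 0 then none else (T.seq hb)[j - 1]?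

/-- the required payment `p^{auc}_{a_j} = v^{(1)}_{V ∖ V_{a_j}}` (and `0` for `j = 0`). -/
def pauc (T : TreeNet α) (V : Finset α) (val : α → ℝ) (hb : α) (j : ℕ) : ℝ :=
  match T.aIdx hb j with
  | none => 0
  | some i => vmax val (V \ T.sub V i)

/-- the children inside `V` of a vertex (`none` denotes the owner `o`). -/
def childrenOf (T : TreeNet α) (V : Finset α) (x : Option α) : Finset α :=
  V.filter fun y => T.parent y = x

/-- `X_j`: the set of children of `a_{j-1}`. -/
def X (T : TreeNet α) (V : Finset α) (hb : α) (j : ℕ) : Finset α :=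
  T.childrenOf V (T.aIdx hb (j - 1))

/-- `n_{X_j} = Σ_{q ∈ X_j} n_q`. -/
def nX (T : TreeNet α) (V : Finset α) (hb : α) (j : ℕ) : ℕ :=
  ∑ q ∈ T.X V hb j, T.nsub V q

/-- subtree of an optional vertex, with the convention `∅` for `none`. -/
def subO (T : TreeNet α) (V : Finset α) : Option α → Finset α
  | none => ∅
  | some i => T.sub V i

/-- subtree of an optional vertex, with the convention `V` for the owner `o`. -/
def subUp (T : TreeNet α) (V : Finset α) : Option α → Finset α
  | none => V
  | some i => T.sub V i

/-- `S_{-q}` at step `j`, where `sel` selects a highest bidder in a given set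
(`h' = sel (V ∖ V_q)` is a highest bidder without `q`'s participation). -/
def Sneg (T : TreeNet α) (V : Finset α) (val : α → ℝ) (sel : Finset α → Option α)
    (hb : α) (j : ℕ) (q : α) : ℝ :=
  match sel (V \ T.sub V q) with
  | none => 0
  | some h' =>
      if T.aIdx h' (j - 1) = T.aIdx hb (j - 1) then
        vmax val (V \ (T.subO V (T.aIdx h' j) ∪ T.sub V q)) - T.pauc V val hb (j - 1)
      else 0

/-- the money `R_q = (n_q / n_{X_j}) ⬝ S_{-q}` redistributed to `q` in step `j`. -/
def R (T : TreeNet α) (V : Finset α) (val : α → ℝ) (sel : Finset α → Option α)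
    (hb : α) (j : ℕ) (q : α) : ℝ :=
  (T.nsub V q : ℝ) / (T.nX V hb j : ℝ) * T.Sneg V val sel hb j q

/-- the allocation condition `v̂_{a_j} ≥ p^{auc}_{a_j}` holds at step `j`. -/
def Stops (T : TreeNet α) (V : Finset α) (val : α → ℝ) (hb : α) (j : ℕ) : Prop :=
  ∃ i, T.aIdx hb j = some i ∧ T.pauc V val hb j ≤ val i

/-- the step `J` at which the procedure stops. -/
def stepJ (T : TreeNet α) (V : Finset α) (val : α → ℝ) (hb : α) : ℕ :=
  sInf {j | 1 ≤ j ∧ T.Stops V val hb j}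

/-- the winner of the item. -/
def winner (T : TreeNet α) (V : Finset α) (val : α → ℝ) (hb : α) : Option α :=
  T.aIdx hb (T.stepJ V val hb)

/-- the (first) step at which agent `i` is assigned a payment. -/
def stepOf (T : TreeNet α) (V : Finset α) (val : α → ℝ) (hb : α) (i : α) : ℕ :=
  sInf {j | 1 ≤ j ∧ j ≤ T.stepJ V val hb ∧ i ∈ T.X V hb j}

/-- the payment of agent `i` under NRM: the winner pays `p^{auc}_{a_J} - R_{a_J}`,
every other agent considered in some executed step `j` pays `-R_q`, and every
agent not assigned a payment pays `0`. -/
def pay (T : TreeNet α) (V : Finset α) (val : α → ℝ) (sel : Finset α → Option α)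
    (hb : α) (i : α) : ℝ :=
  if T.winner V val hb = some i then
    T.pauc V val hb (T.stepJ V val hb) - T.R V val sel hb (T.stepJ V val hb) i
  else if ∃ j, 1 ≤ j ∧ j ≤ T.stepJ V val hb ∧ i ∈ T.X V hb j then
    -T.R V val sel hb (T.stepOf V val hb i) i
  else 0

/-- the surplus `S = Σ_{i ∈ V} p_i` of the mechanism. -/
def surplus (T : TreeNet α) (V : Finset α) (val : α → ℝ) (sel : Finset α → Option α)
    (hb : α) : ℝ :=
  ∑ i ∈ V, T.pay V val sel hb i

/-- the utility of agent `i` whose true valuation is `tv`: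
`tv` if she wins, minus her payment. -/
def util (T : TreeNet α) (V : Finset α) (val : α → ℝ) (sel : Finset α → Option α)
    (hb : α) (tv : ℝ) (i : α) : ℝ :=
  (if T.winner V val hb = some i then tv else 0) - T.pay V val sel hb i

/-- the participant set `V` is closed under taking parents
(as is every set generated by invitation chains). -/
def Closed (T : TreeNet α) (V : Finset α) : Prop :=
  ∀ i ∈ V, ∀ j, T.parent i = some j → j ∈ V

/-- `hb` is a highest bidder of `V`. -/
def IsTop (V : Finset α) (val : α → ℝ) (hb : α) : Prop :=
  hb ∈ V ∧ ∀ i ∈ V, val i ≤ val hb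

/-- `sel` selects a highest bidder of every nonempty finite set of agents. -/
def SelValid (val : α → ℝ) (sel : Finset α → Option α) : Prop :=
  ∀ D : Finset α, (D.Nonempty → ∃ b, sel D = some b) ∧
    ∀ b, sel D = some b → b ∈ D ∧ ∀ x ∈ D, val x ≤ val b

/-- the true neighbour set of agent `i` that she may invite: her children. -/
def childrenAll (T : TreeNet α) (i : α) : Finset α :=
  Finset.univ.filter fun y => T.parent y = some i

/-- agent `i` is reached from the owner by the chains of invitations `inv`
(the owner informs all her neighbours, i.e. the agents with `parent = none`). -/
def Reached (T : TreeNet α) (inv : α → Finset α) (i : α) : Prop :=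
  match h : T.parent i with
  | none => True
  | some j => T.Reached inv j ∧ i ∈ inv j
termination_by T.depth i
decreasing_by
  have := T.depth_child i j h
  omega

/-- the participant set generated by the invitations `inv`. -/
def Vgen (T : TreeNet α) (inv : α → Finset α) : Finset α :=
  Finset.univ.filter fun i => T.Reached inv i

end TreeNet
namespace TreeNet

variable {α : Type} [Fintype α] [DecidableEq α] (T : TreeNet α)

private lemma iter_none (k : ℕ) :
    (fun x : Option α => x.bind T.parent)^[k] none = none :=
  Function.iterate_fixed rfl k

private lemma iter_depth : ∀ (k : ℕ) (z y : α),
    (fun x : Option α => x.bind T.parent)^[k] (some z) = some y →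
    T.depth z = T.depth y + k := by
  intro k
  induction k with
  | zero => intro z y h; simp_all
  | succ n ih =>
    intro z y h
    rw [Function.iterate_succ_apply] at h
    cases hp : T.parent z with
    | none => simp only [hp, Option.bind_some] at h; rw [iter_none] at h; simp at h
    | some p =>
      simp only [Option.bind_some, hp] at h
      have h1 := ih p y h
      have h2 := T.depth_child z p hp
      omega

private lemma ancList_none {w : α} (h : T.parent w = none) : T.ancList w = [] := by
  rw [ancList, h]

private lemma ancList_some {w p : α} (h : T.parent w = some p) :
    T.ancList w = T.ancList p ++ [p] := by
  rw [ancList, h]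

private lemma seq_none {w : α} (h : T.parent w = none) : T.seq w = [w] := by
  rw [seq, ancList_none T h]; rfl

private lemma seq_some {w p : α} (h : T.parent w = some p) :
    T.seq w = T.seq p ++ [w] := by
  rw [seq, ancList_some T h, seq, List.append_assoc]

private lemma seq_length_pos (w : α) : 0 < (T.seq w).length := by
  rw [seq]; simp

end TreeNet
namespace TreeNet

variable {α : Type} [Fintype α] [DecidableEq α]

private lemma seq_iter_aux (T : TreeNet α) : ∀ (n : ℕ) (w : α), T.depth w = n →
    ∀ k, k < (T.seq w).length →
    (fun x : Option α => x.bind T.parent)^[k] (some w)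
      = (T.seq w)[(T.seq w).length - 1 - k]? := by
  intro n
  induction n using Nat.strong_induction_on with
  | _ n ih =>
    intro w hw k hk
    cases hp : T.parent w with
    | none =>
      rw [seq_none T hp] at hk ⊢
      simp at hk
      subst hk; simp
    | some p =>
      have hd := T.depth_child w p hp
      rw [seq_some T hp] at hk ⊢
      set Lp := (T.seq p).length with hLp
      have hLppos := T.seq_length_pos p
      simp only [List.length_append, List.length_singleton] at hk ⊢
      cases k with
      | zero =>
        simp only [Function.iterate_zero, id]
        rw [show Lp + 1 - 1 - 0 = Lp by omega]
        rw [List.getElem?_append_right (by omega)]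
        simp [hLp]
      | succ k' =>
        rw [Function.iterate_succ_apply]
        simp only [Option.bind_some, hp]
        have hk' : k' < Lp := by omega
        have := ih (T.depth p) (by omega) p rfl k' hk'
        rw [this]
        rw [show Lp + 1 - 1 - (k' + 1) = Lp - 1 - k' by omega]
        rw [List.getElem?_append_left (by omega)]

private lemma seq_iter (T : TreeNet α) (w : α) (k : ℕ) (hk : k < (T.seq w).length) :
    (fun x : Option α => x.bind T.parent)^[k] (some w)
      = (T.seq w)[(T.seq w).length - 1 - k]? :=
  seq_iter_aux T (T.depth w) w rfl k hk

private lemma seq_head_aux (T : TreeNet α) : ∀ (n : ℕ) (w : α), T.depth w = n →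
    ∀ x, (T.seq w)[0]? = some x → T.parent x = none := by
  intro n
  induction n using Nat.strong_induction_on with
  | _ n ih =>
    intro w hw x hx
    cases hp : T.parent w with
    | none =>
      rw [seq_none T hp] at hx
      simp at hx; subst hx; exact hp
    | some p =>
      have hd := T.depth_child w p hp
      rw [seq_some T hp] at hx
      rw [List.getElem?_append_left (T.seq_length_pos p)] at hx
      exact ih (T.depth p) (by omega) p rfl x hx

private lemma seq_head (T : TreeNet α) {w x : α} (hx : (T.seq w)[0]? = some x) :
    T.parent x = none :=
  seq_head_aux T (T.depth w) w rfl x hx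

private lemma getElem?_lt {L : List α} {m : ℕ} {x : α} (h : L[m]? = some x) :
    m < L.length := by
  by_contra hc
  rw [List.getElem?_eq_none (by omega)] at h
  simp at h

private lemma seq_iter' (T : TreeNet α) {w x : α} {m : ℕ} (hm : (T.seq w)[m]? = some x) :
    (fun y : Option α => y.bind T.parent)^[(T.seq w).length - 1 - m] (some w) = some x := by
  have hlt := getElem?_lt hm
  rw [seq_iter T w ((T.seq w).length - 1 - m) (by omega)]
  rw [show (T.seq w).length - 1 - ((T.seq w).length - 1 - m) = m by omega]
  exact hm

private lemma seq_parent (T : TreeNet α) {w x : α} {m : ℕ}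
    (hm : (T.seq w)[m + 1]? = some x) : T.parent x = (T.seq w)[m]? := by
  have hlt := getElem?_lt hm
  have h1 := seq_iter' T hm
  set L := (T.seq w).length with hL
  have h2 : (fun y : Option α => y.bind T.parent)^[L - 1 - m] (some w) = T.parent x := by
    rw [show L - 1 - m = (L - 1 - (m+1)) + 1 by omega, Function.iterate_succ_apply', h1]
    rfl
  have h3 := seq_iter T w (L - 1 - m) (by omega)
  rw [h2] at h3
  rw [h3, show L - 1 - (L - 1 - m) = m by omega]

private lemma iter_mem (T : TreeNet α) {V : Finset α} (hV : T.Closed V) :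
    ∀ (k : ℕ) (w x : α), w ∈ V →
    (fun y : Option α => y.bind T.parent)^[k] (some w) = some x → x ∈ V := by
  intro k
  induction k with
  | zero => intro w x hw h; simp at h; subst h; exact hw
  | succ n ihk =>
    intro w x hw h
    rw [Function.iterate_succ_apply] at h
    cases hp : T.parent w with
    | none => simp only [Option.bind_some, hp] at h; rw [iter_none] at h; simp at h
    | some p =>
      simp only [Option.bind_some, hp] at h
      exact ihk p x (hV w hw p hp) h

end TreeNet
namespace TreeNet

variable {α : Type} [Fintype α] [DecidableEq α]

private lemma mem_sub_iff (T : TreeNet α) {V : Finset α} {i z : α} :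
    z ∈ T.sub V i ↔ z ∈ V ∧ (z = i ∨ T.StrictAnc i z) := by
  simp [sub, Finset.mem_filter]

private lemma sub_subset_V (T : TreeNet α) (V : Finset α) (i : α) : T.sub V i ⊆ V :=
  Finset.filter_subset _ _

private lemma mem_iter_of_mem_sub (T : TreeNet α) {V : Finset α} {i z : α}
    (h : z ∈ T.sub V i) : ∃ m : ℕ,
      (fun x : Option α => x.bind T.parent)^[m] (some z) = some i := by
  rcases (T.mem_sub_iff.1 h).2 with h1 | ⟨m, _, h2⟩
  · exact ⟨0, by simp [h1]⟩
  · exact ⟨m, h2⟩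

private lemma sub_mono (T : TreeNet α) {V : Finset α} {y x : α}
    (h : T.parent y = some x) : T.sub V y ⊆ T.sub V x := by
  intro z hz
  rw [mem_sub_iff] at hz ⊢
  refine ⟨hz.1, Or.inr ?_⟩
  rcases hz.2 with h1 | ⟨m, hm, h2⟩
  · exact ⟨1, by omega, by simp [h1, h]⟩
  · exact ⟨m + 1, by omega, by rw [Function.iterate_succ_apply', h2]; simpa using h⟩

private lemma sibling_disjoint (T : TreeNet α) {V : Finset α} {y y' : α}
    (hpar : T.parent y = T.parent y') (hne : y ≠ y') :
    ∀ z, z ∈ T.sub V y → z ∉ T.sub V y' := by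
  intro z hz hz'
  obtain ⟨m, hm⟩ := T.mem_iter_of_mem_sub hz
  obtain ⟨m', hm'⟩ := T.mem_iter_of_mem_sub hz'
  have hd : T.depth y = T.depth y' := by
    cases hp : T.parent y with
    | none => rw [T.depth_root y hp, T.depth_root y' (hpar ▸ hp)]
    | some x => rw [T.depth_child y x hp, T.depth_child y' x (hpar ▸ hp)]
  have d1 := T.iter_depth m z y hm
  have d2 := T.iter_depth m' z y' hm'
  have : m = m' := by omega
  subst this
  rw [hm] at hm'
  exact hne (Option.some_injective _ hm')

private lemma vmax_nonneg {V D : Finset α} {val : α → ℝ}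
    (hval : ∀ i ∈ V, 0 ≤ val i) (hD : D ⊆ V) : 0 ≤ vmax val D := by
  unfold vmax
  split
  · next h => obtain ⟨x, hx⟩ := h; exact le_trans (hval x (hD hx)) (Finset.le_sup' val hx)
  · exact le_refl 0

private lemma le_vmax {D : Finset α} {val : α → ℝ} {x : α} (hx : x ∈ D) :
    val x ≤ vmax val D := by
  unfold vmax
  rw [dif_pos ⟨x, hx⟩]
  exact Finset.le_sup' val hx

private lemma vmax_le {D : Finset α} {val : α → ℝ} {c : ℝ} (h0 : 0 ≤ c)
    (h : ∀ x ∈ D, val x ≤ c) : vmax val D ≤ c := by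
  unfold vmax
  split
  · next hne => exact Finset.sup'_le _ _ h
  · exact h0

private lemma vmax_mono {V A B : Finset α} {val : α → ℝ}
    (hval : ∀ i ∈ V, 0 ≤ val i) (hAB : A ⊆ B) (hB : B ⊆ V) :
    vmax val A ≤ vmax val B :=
  vmax_le (vmax_nonneg hval hB) fun x hx => le_vmax (hAB hx)

end TreeNet
namespace TreeNet

variable {α : Type} [Fintype α] [DecidableEq α]

private lemma seq_last (T : TreeNet α) (w : α) :
    (T.seq w)[(T.seq w).length - 1]? = some w := by
  rw [seq]
  simp only [List.length_append, List.length_singleton]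
  rw [show (T.ancList w).length + 1 - 1 = (T.ancList w).length by omega]
  rw [List.getElem?_append_right (le_refl _)]
  simp

private lemma aIdx_eq (T : TreeNet α) (w : α) {m : ℕ} (hm : 1 ≤ m) :
    T.aIdx w m = (T.seq w)[m - 1]? := by
  rw [aIdx, if_neg (by omega)]

private lemma aIdx_parent (T : TreeNet α) (w : α) {m : ℕ} (hm : 1 ≤ m) {y : α}
    (h : T.aIdx w m = some y) : T.parent y = T.aIdx w (m - 1) := by
  rw [aIdx_eq T w hm] at h
  rcases Nat.eq_or_lt_of_le hm with h1 | h2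
  · have h0 : (T.seq w)[0]? = some y := by rw [← h1] at h; exact h
    rw [← h1]
    rw [aIdx, if_pos rfl]
    exact T.seq_head h0
  · have h' : (T.seq w)[(m - 2) + 1]? = some y := by
      rw [show m - 2 + 1 = m - 1 by omega]; exact h
    rw [T.seq_parent h', aIdx, if_neg (by omega), show m - 1 - 1 = m - 2 by omega]

private lemma self_mem_sub_of_aIdx (T : TreeNet α) {V : Finset α} {w y : α} {m : ℕ}
    (hw : w ∈ V) (hm : 1 ≤ m) (h : T.aIdx w m = some y) : w ∈ T.sub V y := by
  rw [aIdx_eq T w hm] at h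
  have h1 := T.seq_iter' h
  rw [mem_sub_iff]
  refine ⟨hw, ?_⟩
  rcases Nat.eq_zero_or_pos ((T.seq w).length - 1 - (m - 1)) with h0 | h0
  · left
    rw [h0] at h1
    simpa using h1
  · right; exact ⟨_, h0, h1⟩

private lemma depth_le_of_mem_sub (T : TreeNet α) {V : Finset α} {i z : α}
    (h : z ∈ T.sub V i) : T.depth i ≤ T.depth z := by
  obtain ⟨m, hm⟩ := T.mem_iter_of_mem_sub h
  have := T.iter_depth m z i hm
  omega

private lemma mem_X_iff (T : TreeNet α) {V : Finset α} {hb q : α} {j : ℕ} :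
    q ∈ T.X V hb j ↔ q ∈ V ∧ T.parent q = T.aIdx hb (j - 1) := by
  simp [X, childrenOf, Finset.mem_filter]

end TreeNet
/-- Per-step redistribution bound in NRM: for every executed
step `j` of NRM in trees and every `q ∈ X_j`, the quantity `S_{-q}` satisfies
`0 ≤ S_{-q} ≤ p^{auc}_{a_j} - p^{auc}_{a_{j-1}}`; consequently the total money
redistributed in step `j` satisfies
`Σ_{q ∈ X_j} R_q = Σ_{q ∈ X_j} (n_q / n_{X_j}) ⬝ S_{-q} ≤ p^{auc}_{a_j} - p^{auc}_{a_{j-1}}`. -/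
theorem TreeNet.nrm_tree_per_step_redistribution_bound
    {α : Type} [Fintype α] [DecidableEq α] (T : TreeNet α)
    (V : Finset α) (hV : T.Closed V)
    (val : α → ℝ) (hval : ∀ i ∈ V, 0 ≤ val i)
    (sel : Finset α → Option α) (hsel : TreeNet.SelValid val sel)
    (hb : α) (hhb : TreeNet.IsTop V val hb)
    (j : ℕ) (hj1 : 1 ≤ j) (hj2 : j ≤ T.stepJ V val hb) :   -- an executed step
    (∀ q ∈ T.X V hb j,
        0 ≤ T.Sneg V val sel hb j q ∧
        T.Sneg V val sel hb j q ≤ T.pauc V val hb j - T.pauc V val hb (j - 1)) ∧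
    (∑ q ∈ T.X V hb j, T.R V val sel hb j q) =
      (∑ q ∈ T.X V hb j,
        (T.nsub V q : ℝ) / (T.nX V hb j : ℝ) * T.Sneg V val sel hb j q) ∧
    (∑ q ∈ T.X V hb j, T.R V val sel hb j q) ≤
      T.pauc V val hb j - T.pauc V val hb (j - 1) := by
  classical
  obtain ⟨hbV, hbTop⟩ := hhb
  -- the stopping step is a genuine step, so `j` is within range of the sequence
  have hne : {j' | 1 ≤ j' ∧ T.Stops V val hb j'}.Nonempty := by
    by_contra hc
    rw [Set.not_nonempty_iff_eq_empty] at hc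
    have h0 : T.stepJ V val hb = 0 := by
      rw [stepJ, hc, Nat.sInf_empty]
    omega
  have hmem : 1 ≤ T.stepJ V val hb ∧ T.Stops V val hb (T.stepJ V val hb) :=
    Nat.sInf_mem hne
  obtain ⟨hJ1, iJ, hiJ, -⟩ := hmem
  have hJlt : T.stepJ V val hb - 1 < (T.seq hb).length := by
    rw [aIdx_eq T hb hJ1] at hiJ
    exact getElem?_lt hiJ
  have hjlt : j - 1 < (T.seq hb).length := by omega
  obtain ⟨a, ha⟩ : ∃ a, (T.seq hb)[j - 1]? = some a :=
    ⟨_, List.getElem?_eq_getElem hjlt⟩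
  have haIdx : T.aIdx hb j = some a := by rw [aIdx_eq T hb hj1]; exact ha
  have hpa : T.parent a = T.aIdx hb (j - 1) := T.aIdx_parent hb hj1 haIdx
  have haV : a ∈ V := by
    have h1 := T.seq_iter' ha
    exact T.iter_mem hV _ hb a hbV h1
  have hbsub : hb ∈ T.sub V a := T.self_mem_sub_of_aIdx hbV hj1 haIdx
  have hpaucj : T.pauc V val hb j = vmax val (V \ T.sub V a) := by
    simp only [pauc, haIdx]
  -- monotonicity of payments
  have hmono : T.pauc V val hb (j - 1) ≤ T.pauc V val hb j := by
    rcases Nat.eq_or_lt_of_le hj1 with h1 | h2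
    · have h0 : T.aIdx hb (j - 1) = none := by
        rw [aIdx, if_pos (by omega)]
      rw [hpaucj]
      simp only [pauc, h0]
      exact vmax_nonneg hval (Finset.sdiff_subset)
    · obtain ⟨x, hx⟩ : ∃ x, T.aIdx hb (j - 1) = some x := by
        rw [aIdx_eq T hb (by omega)]
        exact ⟨_, List.getElem?_eq_getElem (by omega)⟩
      have hpax : T.parent a = some x := by rw [hpa, hx]
      rw [hpaucj]
      simp only [pauc, hx]
      exact vmax_mono hval
        (Finset.sdiff_subset_sdiff (le_refl V) (T.sub_mono hpax))
        Finset.sdiff_subset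
  -- the payment difference is nonnegative
  have hD : 0 ≤ T.pauc V val hb j - T.pauc V val hb (j - 1) := by linarith
  -- the per-agent bound
  have hq' : ∀ q ∈ T.X V hb j,
      0 ≤ T.Sneg V val sel hb j q ∧
      T.Sneg V val sel hb j q ≤ T.pauc V val hb j - T.pauc V val hb (j - 1) := by
    intro q hq
    rw [mem_X_iff] at hq
    obtain ⟨hqV, hqpar⟩ := hq
    cases hsel' : sel (V \ T.sub V q) with
    | none => simp only [Sneg, hsel']; exact ⟨le_refl 0, hD⟩
    | some h' =>
      by_cases hcond : T.aIdx h' (j - 1) = T.aIdx hb (j - 1)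
      · simp only [Sneg, hsel', if_pos hcond]
        -- the set whose max is taken
        set B := V \ (T.subO V (T.aIdx h' j) ∪ T.sub V q) with hB
        have hBV : B ⊆ V := Finset.sdiff_subset
        obtain ⟨hh'mem, hh'top⟩ := (hsel (V \ T.sub V q)).2 h' hsel'
        have hh'V : h' ∈ V := (Finset.mem_sdiff.1 hh'mem).1
        -- lower bound
        have hlow : T.pauc V val hb (j - 1) ≤ vmax val B := by
          rcases Nat.eq_or_lt_of_le hj1 with h1 | h2
          · have h0 : T.aIdx hb (j - 1) = none := by rw [aIdx, if_pos (by omega)]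
            simp only [pauc, h0]
            exact vmax_nonneg hval hBV
          · obtain ⟨x, hx⟩ : ∃ x, T.aIdx hb (j - 1) = some x := by
              rw [aIdx_eq T hb (by omega)]
              exact ⟨_, List.getElem?_eq_getElem (by omega)⟩
            simp only [pauc, hx]
            refine vmax_mono hval ?_ Finset.sdiff_subset
            refine Finset.sdiff_subset_sdiff (le_refl V) ?_
            refine Finset.union_subset ?_ ?_
            · cases hy : T.aIdx h' j with
              | none => simp [subO]
              | some y =>
                have hpy : T.parent y = some x := by
                  rw [T.aIdx_parent h' hj1 hy, hcond, hx]
                simpa [subO] using T.sub_mono (V := V) hpy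
            · exact T.sub_mono (by rw [hqpar, hx])
        -- upper bound
        have hup : vmax val B ≤ vmax val (V \ T.sub V a) := by
          by_cases hqa : q = a
          · subst hqa
            refine vmax_mono hval ?_ Finset.sdiff_subset
            exact Finset.sdiff_subset_sdiff (le_refl V) Finset.subset_union_right
          · -- q ≠ a; siblings, so hb is outside V_q
            have hpar : T.parent a = T.parent q := by rw [hpa, hqpar]
            have hbnq : hb ∉ T.sub V q :=
              T.sibling_disjoint hpar (fun h => hqa h.symm) hb hbsub
            have hbmem : hb ∈ V \ T.sub V q := Finset.mem_sdiff.2 ⟨hbV, hbnq⟩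
            have hvh' : val h' = val hb :=
              le_antisymm (hbTop h' hh'V) (hh'top hb hbmem)
            by_cases hya : T.aIdx h' j = some a
            · -- direct subset argument
              have hsubO : T.subO V (T.aIdx h' j) = T.sub V a := by rw [hya]; rfl
              refine vmax_mono hval ?_ Finset.sdiff_subset
              rw [hB, hsubO]
              exact Finset.sdiff_subset_sdiff (le_refl V) Finset.subset_union_left
            · -- find a witness outside `V_a` of maximal value
              have hwit : ∃ w ∈ V \ T.sub V a, val w = val hb := by
                cases hy : T.aIdx h' j with
                | none =>
                  -- then `h'` itself equals the ancestor at level `j-1`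
                  have hj2' : 2 ≤ j := by
                    by_contra hc
                    have h1 : j = 1 := by omega
                    subst h1
                    rw [aIdx_eq T h' (le_refl 1)] at hy
                    rw [List.getElem?_eq_getElem (by simpa using T.seq_length_pos h')] at hy
                    simp at hy
                  obtain ⟨x, hx⟩ : ∃ x, T.aIdx hb (j - 1) = some x := by
                    rw [aIdx_eq T hb (by omega)]
                    exact ⟨_, List.getElem?_eq_getElem (by omega)⟩
                  have hx' : T.aIdx h' (j - 1) = some x := by rw [hcond, hx]
                  have hlen : (T.seq h').length ≤ j - 1 := by
                    by_contra hc
                    rw [aIdx_eq T h' hj1, List.getElem?_eq_getElem (by omega)] at hy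
                    simp at hy
                  have hlen2 : j - 1 - 1 < (T.seq h').length := by
                    rw [aIdx_eq T h' (by omega)] at hx'
                    exact getElem?_lt hx'
                  have hxh' : x = h' := by
                    have hlast := T.seq_last h'
                    rw [aIdx_eq T h' (by omega)] at hx'
                    rw [show j - 1 - 1 = (T.seq h').length - 1 by omega] at hx'
                    rw [hlast] at hx'
                    exact (Option.some_injective _ hx').symm
                  subst hxh'
                  have hpax : T.parent a = some x := by rw [hpa, hx]
                  have hxna : x ∉ T.sub V a := by
                    intro hc
                    have h1 := T.depth_le_of_mem_sub hc
                    have h2 := T.depth_child a x hpax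
                    omega
                  exact ⟨x, Finset.mem_sdiff.2 ⟨hh'V, hxna⟩, hvh'⟩
                | some y =>
                  have hya' : y ≠ a := fun h => hya (by rw [hy, h])
                  have hpy : T.parent y = T.parent a := by
                    rw [T.aIdx_parent h' hj1 hy, hcond, hpa]
                  have hh'suby : h' ∈ T.sub V y := T.self_mem_sub_of_aIdx hh'V hj1 hy
                  have hh'na : h' ∉ T.sub V a :=
                    T.sibling_disjoint hpy hya' h' hh'suby
                  exact ⟨h', Finset.mem_sdiff.2 ⟨hh'V, hh'na⟩, hvh'⟩
              obtain ⟨w, hw, hwval⟩ := hwit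
              have h1 : val hb ≤ vmax val (V \ T.sub V a) := hwval ▸ le_vmax hw
              exact le_trans (vmax_le (hval hb hbV) fun x hx => hbTop x (hBV hx)) h1
        exact ⟨by linarith, by linarith⟩
      · simp only [Sneg, hsel', if_neg hcond]
        exact ⟨le_refl 0, hD⟩
  refine ⟨hq', rfl, ?_⟩
  have hcast : ∀ q ∈ T.X V hb j, (0:ℝ) ≤ (T.nsub V q : ℝ) / (T.nX V hb j : ℝ) :=
    fun q _ => div_nonneg (Nat.cast_nonneg _) (Nat.cast_nonneg _)
  calc (∑ q ∈ T.X V hb j, T.R V val sel hb j q)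
      ≤ ∑ q ∈ T.X V hb j, (T.nsub V q : ℝ) / (T.nX V hb j : ℝ) *
          (T.pauc V val hb j - T.pauc V val hb (j - 1)) := by
        refine Finset.sum_le_sum fun q hq => ?_
        exact mul_le_mul_of_nonneg_left ((hq' q hq).2) (hcast q hq)
    _ = (∑ q ∈ T.X V hb j, (T.nsub V q : ℝ) / (T.nX V hb j : ℝ)) *
          (T.pauc V val hb j - T.pauc V val hb (j - 1)) := by
        rw [Finset.sum_mul]
    _ ≤ 1 * (T.pauc V val hb j - T.pauc V val hb (j - 1)) := by
        refine mul_le_mul_of_nonneg_right ?_ hD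
        rw [← Finset.sum_div]
        have : (∑ q ∈ T.X V hb j, (T.nsub V q : ℝ)) = (T.nX V hb j : ℝ) := by
          rw [nX]; push_cast; rfl
        rw [this]
        rcases eq_or_ne ((T.nX V hb j : ℝ)) 0 with h0 | h0
        · rw [h0]; simp
        · rw [div_self h0]
    _ = T.pauc V val hb j - T.pauc V val hb (j - 1) := one_mul _
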